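/- Let Ω = (0,1)^d, and let f ∈ L²(Ω) with ∫_Ω f dx = 0. Define the energy functional E_P(u) = ∫_Ω |∇u|² dx + (∫_Ω u dx)² − 2∫_Ω f u dx on H¹(Ω), and let u* ∈ H¹(Ω) be the weak solution of −Δu = f with homogeneous Neumann boundary condition satisfying ∫_Ω u* dx = 0. Then for every u ∈ H¹(Ω), E_P(u) − E_P(u*) ≤ ‖u − u*‖²_{H¹(Ω)} ≤ C_P (E_P(u) − E_P(u*)), where C_P = max{2c_P + 1, 2} and c_P is the Poincaré constant of Ω. -/

import Mathlib

/-!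
Write `w = u - u*`. Testing the weak formulation with `u` and with `u*` and using `∫ u* = 0`
gives the exact identity `E_P(u) - E_P(u*) = ‖∇w‖² + (∫ w)²`, while
`‖w‖²_{H¹} = Var w + (∫ w)² + ‖∇w‖²` on the probability space `Ω`. Since `0 ≤ Var w ≤ c_P ‖∇w‖²`
by the Poincaré inequality, the energy gap `‖w‖²_{H¹} - Var w` is at most `‖w‖²_{H¹}`, and
`‖w‖²_{H¹} ≤ (c_P + 1) ‖∇w‖² + (∫ w)²` bounds the distance by `max (2 c_P + 1) 2` times the gap.
-/

open MeasureTheory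
open scoped RealInnerProductSpace

/-- The uniform measure on the open unit cube `Ω = (0,1)^d`. -/
noncomputable def cubeMeasure (d : ℕ) : Measure (EuclideanSpace ℝ (Fin d)) :=
  volume.restrict (WithLp.ofLp ⁻¹' Set.univ.pi fun _ : Fin d => Set.Ioo (0 : ℝ) 1)

/-- Membership in (a smooth core of) `H¹(Ω)`: differentiable with `u` and `‖∇u‖` in `L²`. -/
def MemH1 (d : ℕ) (u : EuclideanSpace ℝ (Fin d) → ℝ) : Prop :=
  Differentiable ℝ u ∧ MemLp u 2 (cubeMeasure d) ∧
    MemLp (fun x => ‖gradient u x‖) 2 (cubeMeasure d)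

/-- The Deep Ritz energy functional for the Poisson equation with Neumann boundary:
`E_P(u) = ∫ |∇u|² + (∫ u)² - 2∫ f u`. -/
noncomputable def poissonEnergy (d : ℕ) (f u : EuclideanSpace ℝ (Fin d) → ℝ) : ℝ :=
  (∫ x, ‖gradient u x‖ ^ 2 ∂cubeMeasure d) + (∫ x, u x ∂cubeMeasure d) ^ 2 -
    2 * ∫ x, f x * u x ∂cubeMeasure d

/-- Squared `H¹(Ω)` distance. -/
noncomputable def H1distSq (d : ℕ) (u v : EuclideanSpace ℝ (Fin d) → ℝ) : ℝ :=
  (∫ x, (u x - v x) ^ 2 ∂cubeMeasure d) +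
    ∫ x, ‖gradient u x - gradient v x‖ ^ 2 ∂cubeMeasure d

open ProbabilityTheory

instance cubeMeasure.isProbabilityMeasure (d : ℕ) : IsProbabilityMeasure (cubeMeasure d) := by
  constructor
  rw [cubeMeasure, Measure.restrict_apply_univ,
    (PiLp.volume_preserving_ofLp (Fin d)).measure_preimage
      (MeasurableSet.univ_pi fun _ => measurableSet_Ioo).nullMeasurableSet, volume_pi_pi]
  simp

section Gradient

variable {F : Type*} [NormedAddCommGroup F] [InnerProductSpace ℝ F] [CompleteSpace F]

theorem measurable_gradient [MeasurableSpace F] [BorelSpace F] (u : F → ℝ) :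
    Measurable (gradient u) :=
  (InnerProductSpace.toDual ℝ F).symm.continuous.measurable.comp (measurable_fderiv ℝ u)

theorem gradient_sub {u v : F → ℝ} (hu : Differentiable ℝ u) (hv : Differentiable ℝ v) :
    gradient (u - v) = gradient u - gradient v := by
  ext1 x
  refine HasGradientAt.gradient (hasGradientAt_iff_hasFDerivAt.mpr ?_)
  rw [Pi.sub_apply, map_sub]
  exact (hu x).hasGradientAt.hasFDerivAt.sub (hv x).hasGradientAt.hasFDerivAt

end Gradient

section InnerL2

variable {α E : Type*} [MeasurableSpace α] {μ : Measure α}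
  [NormedAddCommGroup E] [InnerProductSpace ℝ E] {F G : α → E}

theorem integrable_inner_of_memLp_two (hF : MemLp F 2 μ) (hG : MemLp G 2 μ) :
    Integrable (fun x => ⟪F x, G x⟫) μ :=
  (hF.norm.integrable_mul hG.norm).mono' (hF.1.inner hG.1)
    (ae_of_all _ fun _ => (Real.norm_eq_abs _).trans_le (abs_real_inner_le_norm _ _))

theorem integral_norm_sub_sq (hF : MemLp F 2 μ) (hG : MemLp G 2 μ) :
    ∫ x, ‖F x - G x‖ ^ 2 ∂μ =
      (∫ x, ‖F x‖ ^ 2 ∂μ) - 2 * (∫ x, ⟪F x, G x⟫ ∂μ) + ∫ x, ‖G x‖ ^ 2 ∂μ := by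
  have hFG := (integrable_inner_of_memLp_two hF hG).const_mul 2
  simp only [norm_sub_sq_real]
  rw [integral_add, integral_sub hF.norm.integrable_sq hFG, integral_const_mul]
  · exact hF.norm.integrable_sq.sub hFG
  · exact hG.norm.integrable_sq

end InnerL2

namespace MemH1

variable {d : ℕ} {u v : EuclideanSpace ℝ (Fin d) → ℝ}

theorem memLp_gradient (hu : MemH1 d u) : MemLp (gradient u) 2 (cubeMeasure d) :=
  (memLp_norm_iff (measurable_gradient u).aestronglyMeasurable).mp hu.2.2

theorem sub (hu : MemH1 d u) (hv : MemH1 d v) : MemH1 d (u - v) := by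
  refine ⟨hu.1.sub hv.1, hu.2.1.sub hv.2.1, ?_⟩
  rw [gradient_sub hu.1 hv.1]
  exact (hu.memLp_gradient.sub hv.memLp_gradient).norm

end MemH1

section Energy

variable {d : ℕ}

theorem poissonEnergy_sub_eq {f ustar u : EuclideanSpace ℝ (Fin d) → ℝ}
    (hustar : MemH1 d ustar) (hmean : ∫ x, ustar x ∂cubeMeasure d = 0)
    (hweak : ∀ v, MemH1 d v →
      ∫ x, ⟪gradient ustar x, gradient v x⟫ ∂cubeMeasure d = ∫ x, f x * v x ∂cubeMeasure d)
    (hu : MemH1 d u) :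
    poissonEnergy d f u - poissonEnergy d f ustar =
      (∫ x, ‖gradient u x - gradient ustar x‖ ^ 2 ∂cubeMeasure d) +
        (∫ x, u x ∂cubeMeasure d) ^ 2 := by
  rw [poissonEnergy, poissonEnergy, ← hweak u hu, ← hweak ustar hustar, hmean,
    integral_norm_sub_sq hu.memLp_gradient hustar.memLp_gradient]
  simp only [real_inner_self_eq_norm_sq, real_inner_comm (gradient u _)]
  ring

theorem H1distSq_eq_variance_add {u v : EuclideanSpace ℝ (Fin d) → ℝ}
    (h : MemLp (u - v) 2 (cubeMeasure d)) :
    H1distSq d u v = Var[u - v; cubeMeasure d] + (∫ x, (u - v) x ∂cubeMeasure d) ^ 2 +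
      ∫ x, ‖gradient u x - gradient v x‖ ^ 2 ∂cubeMeasure d := by
  rw [variance_eq_sub h, H1distSq]
  simp only [Pi.pow_apply, Pi.sub_apply]
  ring

end Energy

theorem poisson_energy_equiv_H1_general (d : ℕ) (f ustar : EuclideanSpace ℝ (Fin d) → ℝ)
    (hustar : MemH1 d ustar)
    (hmean : ∫ x, ustar x ∂cubeMeasure d = 0)
    (hweak : ∀ v, MemH1 d v →
      ∫ x, ⟪gradient ustar x, gradient v x⟫ ∂cubeMeasure d = ∫ x, f x * v x ∂cubeMeasure d)
    (cP : ℝ)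
    (hpoincare : ∀ v, MemH1 d v →
      ∫ x, (v x - ∫ y, v y ∂cubeMeasure d) ^ 2 ∂cubeMeasure d ≤
        cP * ∫ x, ‖gradient v x‖ ^ 2 ∂cubeMeasure d) :
    ∀ u, MemH1 d u →
      poissonEnergy d f u - poissonEnergy d f ustar ≤ H1distSq d u ustar ∧
      H1distSq d u ustar ≤
        max (2 * cP + 1) 2 * (poissonEnergy d f u - poissonEnergy d f ustar) := by
  intro u hu
  have hw := hu.sub hustar
  have hmean_w : ∫ x, (u - ustar) x ∂cubeMeasure d = ∫ x, u x ∂cubeMeasure d := by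
    rw [integral_sub' (hu.2.1.integrable one_le_two) (hustar.2.1.integrable one_le_two), hmean,
      sub_zero]
  have hpoin : Var[u - ustar; cubeMeasure d] ≤
      cP * ∫ x, ‖gradient u x - gradient ustar x‖ ^ 2 ∂cubeMeasure d := by
    rw [variance_eq_integral hw.2.1.aemeasurable]
    simpa only [gradient_sub hu.1 hustar.1, Pi.sub_apply] using hpoincare _ hw
  have hvar := variance_nonneg (u - ustar) (cubeMeasure d)
  have hgrad : 0 ≤ ∫ x, ‖gradient u x - gradient ustar x‖ ^ 2 ∂cubeMeasure d :=
    integral_nonneg fun _ => sq_nonneg _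
  have hC : cP + 1 ≤ max (2 * cP + 1) 2 := by
    rw [le_max_iff]
    by_contra!
    linarith
  rw [poissonEnergy_sub_eq hustar hmean hweak hu, H1distSq_eq_variance_add hw.2.1, hmean_w]
  refine ⟨by linarith, ?_⟩
  calc _ ≤ (cP + 1) * (∫ x, ‖gradient u x - gradient ustar x‖ ^ 2 ∂cubeMeasure d) +
        1 * (∫ x, u x ∂cubeMeasure d) ^ 2 := by linarith
    _ ≤ max (2 * cP + 1) 2 * (∫ x, ‖gradient u x - gradient ustar x‖ ^ 2 ∂cubeMeasure d) +
        max (2 * cP + 1) 2 * (∫ x, u x ∂cubeMeasure d) ^ 2 := by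
      gcongr
      exact le_max_of_le_right one_le_two
    _ = _ := by ring

/-- Strong convexity/smoothness of the Poisson energy around the weak Neumann solution:
`E_P(u) - E_P(u*) ≤ ‖u - u*‖²_{H¹} ≤ C_P (E_P(u) - E_P(u*))` with
`C_P = max (2 c_P + 1) 2`. -/
theorem poisson_energy_equiv_H1 (d : ℕ) (f ustar : EuclideanSpace ℝ (Fin d) → ℝ)
    (hf : MemLp f 2 (cubeMeasure d))
    (hfmean : ∫ x, f x ∂cubeMeasure d = 0)
    (hustar : MemH1 d ustar)
    (hmean : ∫ x, ustar x ∂cubeMeasure d = 0)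
    (hweak : ∀ v, MemH1 d v →
      ∫ x, ⟪gradient ustar x, gradient v x⟫ ∂cubeMeasure d = ∫ x, f x * v x ∂cubeMeasure d)
    (cP : ℝ) (hcP : 0 ≤ cP)
    (hpoincare : ∀ v, MemH1 d v →
      ∫ x, (v x - ∫ y, v y ∂cubeMeasure d) ^ 2 ∂cubeMeasure d ≤
        cP * ∫ x, ‖gradient v x‖ ^ 2 ∂cubeMeasure d) :
    ∀ u, MemH1 d u →
      poissonEnergy d f u - poissonEnergy d f ustar ≤ H1distSq d u ustar ∧
      H1distSq d u ustar ≤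
        max (2 * cP + 1) 2 * (poissonEnergy d f u - poissonEnergy d f ustar) :=
  poisson_energy_equiv_H1_general d f ustar hustar hmean hweak cP hpoincare
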